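/- arXiv:math/0610684 — 2 statements merged into one kernel-verified Lean document; each statement's English description precedes it below -/
import Mathlib

section
/- For every positive integer m, the number of sublattices of index m in ℤ^n equals the number of n×n lower-triangular integer matrices (r_{ij}) with r_{ii} > r_{ij} ≥ 0 for all 1 ≤ j < i ≤ n and r_{11}r_{22}⋯r_{nn} = m. -/
/-!
Induct on `n`, splitting `ℤ^(n+1) = ℤ × A` with `A = ℤ^n`. A subgroup `H ≤ ℤ × A` of finite
index is determined by the index `d` of its projection `dℤ` to `ℤ`, by its trace `H₀` on `A`, and
by the coset `v ∈ A ⧸ H₀` of the elements `x` with `(d, x) ∈ H`; its index is `d * [A : H₀]`.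
Dually, a matrix of size `n + 1` is determined by `r₁₁ = d`, by its lower-right block (a matrix of
size `n` with diagonal product `m / d`), and by its first column below the diagonal, which ranges
over a set with `∏ rᵢᵢ = m / d = |A ⧸ H₀|` elements. The induction hypothesis matches the `H₀`
with the blocks, and the cosets with the columns.
-/

/-- The number of sublattices (subgroups) of index `m` in `ℤ^n`. -/
noncomputable def sublatticeCount (n m : ℕ) : ℕ :=
  Nat.card {H : AddSubgroup (Fin n → ℤ) // H.index = m}

open AddSubgroup

theorem Int.addSubgroup_eq_zmultiples_index (S : AddSubgroup ℤ) :
    S = zmultiples (S.index : ℤ) := by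
  obtain ⟨a, rfl⟩ : ∃ a : ℤ, S = zmultiples a := by
    obtain ⟨a, ha⟩ := Int.subgroup_cyclic S
    exact ⟨a, by rw [ha, zmultiples_eq_closure]⟩
  rw [Int.index_zmultiples, Int.zmultiples_natAbs]

def AddEquiv.subgroupsOfIndexCongr {G G' : Type*} [AddGroup G] [AddGroup G'] (e : G ≃+ G')
    (m : ℕ) : {H : AddSubgroup G // H.index = m} ≃ {H : AddSubgroup G' // H.index = m} :=
  e.mapAddSubgroup.toEquiv.subtypeEquiv fun H => by simp

theorem Nat.nonempty_equiv_of_card_eq {α β : Type*} (h : Nat.card α = Nat.card β)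
    (h0 : Nat.card α ≠ 0) : Nonempty (α ≃ β) :=
  have : Finite α := Nat.finite_of_card_ne_zero h0
  have : Finite β := Nat.finite_of_card_ne_zero (h ▸ h0)
  Finite.card_eq.mp h

section IntProd

variable {A : Type*} [AddCommGroup A]

theorem AddSubgroup.index_eq_index_map_fst_mul_index_comap_inr {B : Type*} [AddCommGroup B]
    (H : AddSubgroup (B × A)) :
    H.index = (H.map (AddMonoidHom.fst B A)).index * (H.comap (AddMonoidHom.inr B A)).index := by
  have hker : (AddMonoidHom.fst B A).ker = (AddMonoidHom.inr B A).range := by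
    ext ⟨b, a⟩
    simp [mem_prod, eq_comm]
  have hsup : (H.map (AddMonoidHom.fst B A)).comap (AddMonoidHom.fst B A) =
      H ⊔ (AddMonoidHom.inr B A).range := by
    rw [comap_map_eq, hker]
  rw [← relIndex_mul_index (le_sup_left : H ≤ H ⊔ (AddMonoidHom.inr B A).range),
    relIndex_sup_left, ← index_comap, ← hsup,
    index_comap_of_surjective _ (f := AddMonoidHom.fst B A) Prod.fst_surjective, mul_comm]

def extendSubgroup (H₀ : AddSubgroup A) (d : ℤ) (v : A ⧸ H₀) : AddSubgroup (ℤ × A) where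
  carrier := {z | ∃ k : ℤ, z.1 = k * d ∧ (z.2 : A ⧸ H₀) = k • v}
  add_mem' := by
    rintro _ _ ⟨k, hk₁, hk₂⟩ ⟨l, hl₁, hl₂⟩
    exact ⟨k + l, by simp [hk₁, hl₁, add_mul], by simp [hk₂, hl₂, add_smul]⟩
  zero_mem' := ⟨0, by simp, by simp⟩
  neg_mem' := by
    rintro _ ⟨k, hk₁, hk₂⟩
    exact ⟨-k, by simp [hk₁], by simp [hk₂]⟩

variable {H₀ : AddSubgroup A} {d : ℤ}

theorem mem_extendSubgroup {v : A ⧸ H₀} {z : ℤ × A} :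
    z ∈ extendSubgroup H₀ d v ↔ ∃ k : ℤ, z.1 = k * d ∧ (z.2 : A ⧸ H₀) = k • v :=
  Iff.rfl

theorem comap_inr_extendSubgroup (hd : d ≠ 0) (v : A ⧸ H₀) :
    (extendSubgroup H₀ d v).comap (AddMonoidHom.inr ℤ A) = H₀ := by
  ext a
  simp only [mem_comap, AddMonoidHom.inr_apply, mem_extendSubgroup, zero_eq_mul, hd, or_false]
  constructor
  · rintro ⟨k, rfl, ha⟩
    simpa [QuotientAddGroup.eq_zero_iff] using ha
  · exact fun ha => ⟨0, rfl, by simpa [QuotientAddGroup.eq_zero_iff] using ha⟩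

theorem map_fst_extendSubgroup (v : A ⧸ H₀) :
    (extendSubgroup H₀ d v).map (AddMonoidHom.fst ℤ A) = zmultiples d := by
  ext t
  simp only [mem_map, AddMonoidHom.coe_fst, mem_extendSubgroup, Int.mem_zmultiples_iff]
  constructor
  · rintro ⟨z, ⟨k, hk, -⟩, rfl⟩
    exact ⟨k, hk.trans (mul_comm _ _)⟩
  · rintro ⟨k, rfl⟩
    obtain ⟨x, rfl⟩ := QuotientAddGroup.mk_surjective v
    exact ⟨(d * k, k • x), ⟨k, mul_comm _ _, by simp⟩, rfl⟩

theorem index_extendSubgroup (hd : d ≠ 0) (v : A ⧸ H₀) :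
    (extendSubgroup H₀ d v).index = d.natAbs * H₀.index := by
  rw [index_eq_index_map_fst_mul_index_comap_inr, map_fst_extendSubgroup,
    comap_inr_extendSubgroup hd, Int.index_zmultiples]

theorem extendSubgroup_injective (hd : d ≠ 0) :
    Function.Injective (extendSubgroup H₀ d) := by
  intro v w hvw
  obtain ⟨x, rfl⟩ := QuotientAddGroup.mk_surjective v
  have hx : (d, x) ∈ extendSubgroup H₀ d x := ⟨1, by simp, by simp⟩
  obtain ⟨k, hk, hxw⟩ := hvw ▸ hx
  obtain rfl : k = 1 := by simpa [hd] using (mul_eq_right₀ hd).mp hk.symm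
  simpa using hxw

theorem eq_extendSubgroup_of_map_fst_eq (H : AddSubgroup (ℤ × A))
    (hH : H.map (AddMonoidHom.fst ℤ A) = zmultiples d) :
    ∃ v, H = extendSubgroup (H.comap (AddMonoidHom.inr ℤ A)) d v := by
  obtain ⟨⟨_, x⟩, hx, rfl⟩ : d ∈ H.map (AddMonoidHom.fst ℤ A) := hH ▸ mem_zmultiples d
  refine ⟨x, le_antisymm (fun z hz => ?_) ?_⟩
  · obtain ⟨k, hk⟩ : z.1 ∈ zmultiples _ := hH ▸ mem_map_of_mem _ hz
    refine ⟨k, by simp [← hk], ?_⟩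
    rw [← QuotientAddGroup.mk_zsmul, QuotientAddGroup.eq_iff_sub_mem, mem_comap]
    convert H.sub_mem hz (H.zsmul_mem hx k) using 1
    ext <;> simp [← hk]
  · rintro z ⟨k, hk, hz⟩
    rw [← QuotientAddGroup.mk_zsmul, QuotientAddGroup.eq_iff_sub_mem, mem_comap] at hz
    convert H.add_mem hz (H.zsmul_mem hx k) using 1
    ext <;> simp [hk]

variable (A) in
def sigmaToSubgroupsOfIndex {m : ℕ} (hm : m ≠ 0) :
    (Σ p : {p : ℕ × ℕ // p.1 * p.2 = m}, Σ H₀ : {H₀ : AddSubgroup A // H₀.index = p.1.2},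
      A ⧸ H₀.1) → {H : AddSubgroup (ℤ × A) // H.index = m} :=
  fun x => ⟨extendSubgroup x.2.1.1 x.1.1.1 x.2.2, by
    obtain ⟨⟨⟨d, k⟩, hdk⟩, ⟨H₀, hH₀⟩, v⟩ := x
    have hd : (d : ℤ) ≠ 0 := by exact_mod_cast left_ne_zero_of_mul (hdk ▸ hm)
    rw [index_extendSubgroup hd, Int.natAbs_natCast, hH₀, hdk]⟩

theorem sigmaToSubgroupsOfIndex_bijective {m : ℕ} (hm : m ≠ 0) :
    Function.Bijective (sigmaToSubgroupsOfIndex A hm) := by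
  constructor
  · rintro ⟨⟨⟨d, k⟩, hdk⟩, ⟨H₀, hH₀⟩, v⟩ ⟨⟨⟨d', k'⟩, hdk'⟩, ⟨H₀', hH₀'⟩, v'⟩ h
    have h : extendSubgroup H₀ d v = extendSubgroup H₀' d' v' := congrArg Subtype.val h
    have hd : (d : ℤ) ≠ 0 := by exact_mod_cast left_ne_zero_of_mul (hdk ▸ hm)
    have hd' : (d' : ℤ) ≠ 0 := by exact_mod_cast left_ne_zero_of_mul (hdk' ▸ hm)
    obtain rfl : d = d' := by
      simpa [map_fst_extendSubgroup, Int.index_zmultiples] using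
        congrArg (fun H => (H.map (AddMonoidHom.fst ℤ A)).index) h
    obtain rfl : H₀ = H₀' := (comap_inr_extendSubgroup hd v).symm.trans <|
      (congrArg _ h).trans (comap_inr_extendSubgroup hd' v')
    obtain rfl : k = k' := hH₀.symm.trans hH₀'
    obtain rfl : v = v' := extendSubgroup_injective hd h
    rfl
  · rintro ⟨H, rfl⟩
    obtain ⟨v, hv⟩ := eq_extendSubgroup_of_map_fst_eq H (Int.addSubgroup_eq_zmultiples_index _)
    exact ⟨⟨⟨(_, _), (index_eq_index_map_fst_mul_index_comap_inr H).symm⟩,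
      ⟨H.comap (AddMonoidHom.inr ℤ A), rfl⟩, v⟩, Subtype.ext hv.symm⟩

end IntProd

abbrev BoundedLowerTriangular (n m : ℕ) : Type :=
  {r : Fin n → Fin n → ℕ //
    (∀ i j, i < j → r i j = 0) ∧ (∀ i j : Fin n, j < i → r i j < r i i) ∧ ∏ i, r i i = m}

namespace BoundedLowerTriangular

variable {n m : ℕ}

def cons (d : ℕ) (c : Fin n → ℕ) (r : Fin n → Fin n → ℕ) : Fin (n + 1) → Fin (n + 1) → ℕ :=
  Fin.cons (Fin.cons d 0) fun i => Fin.cons (c i) (r i)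

def ofSigma :
    (Σ p : {p : ℕ × ℕ // p.1 * p.2 = m}, Σ r : BoundedLowerTriangular n p.1.2, ∀ i, Fin (r.1 i i)) →
      BoundedLowerTriangular (n + 1) m :=
  fun x => ⟨cons x.1.1.1 (fun i => x.2.2 i) x.2.1.1, by
    obtain ⟨⟨⟨d, k⟩, hdk⟩, ⟨r, hr0, hrlt, hrprod⟩, c⟩ := x
    refine ⟨?_, ?_, ?_⟩
    · simpa [Fin.forall_fin_succ, cons] using hr0
    · simpa [Fin.forall_fin_succ, cons] using hrlt
    · simp [Fin.prod_univ_succ, cons, hrprod, hdk]⟩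

theorem ofSigma_bijective : Function.Bijective (ofSigma (n := n) (m := m)) := by
  constructor
  · rintro ⟨⟨⟨d, k⟩, hdk⟩, ⟨r, hr⟩, c⟩ ⟨⟨⟨d', k'⟩, hdk'⟩, ⟨r', hr'⟩, c'⟩ h
    have h : cons d (fun i => c i) r = cons d' (fun i => c' i) r' := congrArg Subtype.val h
    obtain rfl : d = d' := by simpa [cons] using congrFun (congrFun h 0) 0
    obtain rfl : r = r' := funext fun i => funext fun j => by
      simpa [cons] using congrFun (congrFun h i.succ) j.succ
    obtain rfl : k = k' := hr.2.2.symm.trans hr'.2.2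
    obtain rfl : c = c' := funext fun i => Fin.ext <| by
      simpa [cons] using congrFun (congrFun h i.succ) 0
    rfl
  · rintro ⟨M, hM0, hMlt, hMprod⟩
    refine ⟨⟨⟨(M 0 0, ∏ i : Fin n, M i.succ i.succ), by simpa [Fin.prod_univ_succ] using hMprod⟩,
      ⟨fun i j => M i.succ j.succ, fun i j hij => hM0 _ _ (Fin.succ_lt_succ_iff.2 hij),
        fun i j hij => hMlt _ _ (Fin.succ_lt_succ_iff.2 hij), rfl⟩,
      fun i => ⟨M i.succ 0, hMlt _ _ i.succ_pos⟩⟩, Subtype.ext ?_⟩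
    funext i j
    cases i using Fin.cases <;> cases j using Fin.cases <;>
      simp [ofSigma, cons, hM0 0 _ (Fin.succ_pos _)]

noncomputable def sigmaQuotientEquiv {G : Type*} [AddGroup G] {k : ℕ} (hk : k ≠ 0)
    (e : {H : AddSubgroup G // H.index = k} ≃ BoundedLowerTriangular n k) :
    (Σ H : {H : AddSubgroup G // H.index = k}, G ⧸ H.1) ≃
      Σ r : BoundedLowerTriangular n k, ∀ i, Fin (r.1 i i) :=
  e.sigmaCongr fun H => Classical.choice <| Nat.nonempty_equiv_of_card_eq
    (by rw [Nat.card_pi]; simp only [Nat.card_fin, (e H).2.2.2]; exact H.2)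
    (H.2.trans_ne hk)

end BoundedLowerTriangular

theorem nonempty_subgroupsOfIndex_equiv_boundedLowerTriangular (n : ℕ) {m : ℕ} (hm : m ≠ 0) :
    Nonempty ({H : AddSubgroup (Fin n → ℤ) // H.index = m} ≃ BoundedLowerTriangular n m) := by
  induction n generalizing m with
  | zero =>
    refine ⟨equivOfSubsingletonOfSubsingleton
      (fun H => ⟨fun i => i.elim0, fun i => i.elim0, fun i => i.elim0, ?_⟩)
      fun r => ⟨⊤, by simp [← r.2.2.2]⟩⟩
    simp [← H.2, Subsingleton.elim H.1 ⊤]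
  | succ n ih =>
    let e := (Fin.consLinearEquiv ℤ fun _ : Fin (n + 1) => ℤ).toAddEquiv
    have hk (p : {p : ℕ × ℕ // p.1 * p.2 = m}) : p.1.2 ≠ 0 := right_ne_zero_of_mul (p.2 ▸ hm)
    exact ⟨(e.symm.subgroupsOfIndexCongr m).trans <|
      (Equiv.ofBijective _ (sigmaToSubgroupsOfIndex_bijective hm)).symm.trans <|
      (Equiv.sigmaCongrRight fun p =>
        BoundedLowerTriangular.sigmaQuotientEquiv (hk p) (ih (hk p)).some).trans <|
      Equiv.ofBijective _ BoundedLowerTriangular.ofSigma_bijective⟩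

theorem sublattice_count_eq_card_triangular_matrices (n m : ℕ) (hm : 0 < m) :
    sublatticeCount n m =
      Nat.card {r : Fin n → Fin n → ℕ //
        (∀ i j, i < j → r i j = 0) ∧
        (∀ i j : Fin n, j < i → r i j < r i i) ∧
        ∏ i, r i i = m} :=
  Nat.card_congr (nonempty_subgroupsOfIndex_equiv_boundedLowerTriangular n hm.ne').some
end

section
/- For fixed n ≥ 1 and prime p, the number of subgroups of ℤ^n of index p^k, viewed as a function of p, is given by a polynomial in p with nonnegative integer coefficients (namely the Gaussian binomial polynomial [n+k−1 choose k]_q evaluated at q = p). -/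
namespace AddSubgroup

variable {A : Type*} [AddCommGroup A]

def skewProd (d : ℕ) (K : AddSubgroup A) (q : A ⧸ K) : AddSubgroup (ℤ × A) :=
  ((QuotientAddGroup.mk' K).comp (AddMonoidHom.snd ℤ A) -
      (zmultiplesHom _ q).comp (AddMonoidHom.fst ℤ A)).ker.map
    ((zmultiplesHom ℤ (d : ℤ)).prodMap (AddMonoidHom.id A))

variable {d : ℕ} {K : AddSubgroup A} {q : A ⧸ K}

theorem mem_skewProd {z : ℤ × A} :
    z ∈ skewProd d K q ↔ ∃ t : ℤ, t * d = z.1 ∧ (z.2 : A ⧸ K) = t • q := by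
  simp [skewProd, Prod.ext_iff, sub_eq_zero, and_comm]

theorem index_skewProd (hd : d ≠ 0) : (skewProd d K q).index = d * K.index := by
  rw [skewProd, index_map_of_injective _ ?inj, index_ker,
    AddMonoidHom.range_eq_top_of_surjective _ ?surj, card_top, AddMonoidHom.range_prodMap,
    index_prod, range_zmultiplesHom, Int.index_zmultiples, Int.natAbs_natCast,
    (AddMonoidHom.id A).range_eq_top.2 Function.surjective_id, index_top, mul_one, mul_comm, index]
  case inj =>
    rw [AddMonoidHom.coe_prodMap]
    refine Prod.map_injective.2 ⟨fun s t h ↦ ?_, Function.injective_id⟩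
    simpa [hd] using h
  case surj =>
    intro x
    obtain ⟨x, rfl⟩ := QuotientAddGroup.mk_surjective x
    exact ⟨(0, x), by simp⟩

theorem comap_inr_skewProd (hd : d ≠ 0) :
    (skewProd d K q).comap (AddMonoidHom.inr ℤ A) = K := by
  ext x
  simp [mem_skewProd, hd, QuotientAddGroup.eq_zero_iff]

theorem natCast_mem_skewProd_iff (hd : d ≠ 0) {x : A} :
    ((d : ℤ), x) ∈ skewProd d K q ↔ (x : A ⧸ K) = q := by
  simp [mem_skewProd, hd]

theorem exists_eq_skewProd {H : AddSubgroup (ℤ × A)} (hH : H.index ≠ 0) :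
    ∃ d ≠ 0, ∃ (K : AddSubgroup A) (q : A ⧸ K), H = skewProd d K q := by
  obtain ⟨a, ha⟩ := Int.subgroup_cyclic (H.map (AddMonoidHom.fst ℤ A))
  set d := a.natAbs
  have hfst : H.map (AddMonoidHom.fst ℤ A) = zmultiples (d : ℤ) := by
    rw [ha, Int.zmultiples_natAbs, zmultiples_eq_closure]
  have hd : d ≠ 0 := by
    intro hd
    have := index_map_dvd H (f := AddMonoidHom.fst ℤ A) Prod.fst_surjective
    simp only [hfst, hd, Int.index_zmultiples, Nat.cast_zero, Int.natAbs_zero, zero_dvd_iff] at this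
    exact hH this
  obtain ⟨⟨_, x₀⟩, hx₀, rfl⟩ : (d : ℤ) ∈ H.map (AddMonoidHom.fst ℤ A) :=
    hfst ▸ mem_zmultiples _
  have mem_iff (t : ℤ) (u : A) :
      (t * d, u) ∈ H ↔ (u : A ⧸ H.comap (AddMonoidHom.inr ℤ A)) = t • x₀ := by
    have : (t * d, u) = AddMonoidHom.inr ℤ A (u - t • x₀) + t • ((d : ℤ), x₀) := by
      ext <;> simp
    rw [this, add_mem_cancel_right (zsmul_mem hx₀ t), ← mem_comap,
      ← QuotientAddGroup.eq_iff_sub_mem, QuotientAddGroup.mk_zsmul]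
  refine ⟨d, hd, H.comap (AddMonoidHom.inr ℤ A), x₀, ?_⟩
  ext ⟨s, u⟩
  rw [mem_skewProd]
  constructor
  · intro hsu
    obtain ⟨t, rfl⟩ : s ∈ zmultiples (d : ℤ) := hfst ▸ mem_map_of_mem _ hsu
    exact ⟨t, smul_eq_mul .., (mem_iff t u).1 hsu⟩
  · rintro ⟨t, rfl, hu⟩
    exact (mem_iff t u).2 hu

variable (A) in
noncomputable def subgroupsIntProdIndexEquiv (m : ℕ) (hm : m ≠ 0) :
    (Σ e : m.divisors, Σ K : {K : AddSubgroup A // K.index = e}, A ⧸ K.1) ≃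
      {H : AddSubgroup (ℤ × A) // H.index = m} := by
  have hdiv {e : ℕ} (he : e ∈ m.divisors) : m / e ≠ 0 :=
    (Nat.div_ne_zero_iff_of_dvd (Nat.dvd_of_mem_divisors he)).2
      ⟨hm, (Nat.pos_of_mem_divisors he).ne'⟩
  refine Equiv.ofBijective (fun x ↦ ⟨skewProd (m / x.1) x.2.1 x.2.2, ?_⟩) ⟨?_, ?_⟩
  · rw [index_skewProd (hdiv x.1.2), x.2.1.2, Nat.div_mul_cancel (Nat.dvd_of_mem_divisors x.1.2)]
  · rintro ⟨⟨e, he⟩, ⟨K, hK⟩, q⟩ ⟨⟨e', he'⟩, ⟨K', hK'⟩, q'⟩ h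
    have h : skewProd (m / e) K q = skewProd (m / e') K' q' := congrArg Subtype.val h
    obtain rfl : K = K' := by
      simpa only [comap_inr_skewProd (hdiv he), comap_inr_skewProd (hdiv he')] using
        congrArg (comap (AddMonoidHom.inr ℤ A)) h
    obtain rfl : e = e' := hK.symm.trans hK'
    obtain rfl : q = q' := by
      obtain ⟨x, rfl⟩ := QuotientAddGroup.mk_surjective q
      exact (natCast_mem_skewProd_iff (hdiv he)).1
        (h ▸ (natCast_mem_skewProd_iff (hdiv he)).2 rfl)
    rfl
  · rintro ⟨H, hH⟩
    obtain ⟨d, hd, K, q, rfl⟩ := exists_eq_skewProd (hH ▸ hm)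
    rw [index_skewProd hd] at hH
    have hK : K.index ≠ 0 := right_ne_zero_of_mul (hH ▸ hm)
    refine ⟨⟨⟨K.index, Nat.mem_divisors.2 ⟨Dvd.intro_left _ hH, hm⟩⟩, ⟨K, rfl⟩, q⟩,
      Subtype.ext ?_⟩
    simp only [← hH, Nat.mul_div_cancel _ (Nat.pos_of_ne_zero hK)]

theorem finite_subgroups_int_prod_index_eq {m : ℕ} (hm : m ≠ 0)
    (hfin : ∀ e ∈ m.divisors, Finite {K : AddSubgroup A // K.index = e}) :
    Finite {H : AddSubgroup (ℤ × A) // H.index = m} := by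
  have (e : m.divisors) := hfin e e.2
  have (e : m.divisors) (K : {K : AddSubgroup A // K.index = e}) : Finite (A ⧸ K.1) :=
    Nat.finite_of_card_ne_zero (K.2.trans_ne (Nat.pos_of_mem_divisors e.2).ne')
  exact Finite.of_equiv _ (subgroupsIntProdIndexEquiv A m hm)

theorem card_subgroups_int_prod_index_eq {m : ℕ} (hm : m ≠ 0)
    (hfin : ∀ e ∈ m.divisors, Finite {K : AddSubgroup A // K.index = e}) :
    Nat.card {H : AddSubgroup (ℤ × A) // H.index = m} =
      ∑ e ∈ m.divisors, Nat.card {K : AddSubgroup A // K.index = e} * e := by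
  have (e : m.divisors) := hfin e e.2
  have (e : m.divisors) (K : {K : AddSubgroup A // K.index = e}) : Finite (A ⧸ K.1) :=
    Nat.finite_of_card_ne_zero (K.2.trans_ne (Nat.pos_of_mem_divisors e.2).ne')
  have (e : m.divisors) := Fintype.ofFinite {K : AddSubgroup A // K.index = e}
  rw [← Nat.card_congr (subgroupsIntProdIndexEquiv A m hm), Nat.card_sigma,
    ← Finset.sum_coe_sort m.divisors]
  refine Finset.sum_congr rfl fun e _ ↦ ?_
  rw [Nat.card_sigma, Finset.sum_congr rfl fun K _ ↦ K.2]
  simp [Nat.card_eq_fintype_card]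

end AddSubgroup

noncomputable def AddEquiv.subgroupsIndexEqCongr {G G' : Type*} [AddGroup G] [AddGroup G']
    (e : G ≃+ G') (m : ℕ) :
    {H : AddSubgroup G // H.index = m} ≃ {H : AddSubgroup G' // H.index = m} :=
  e.mapAddSubgroup.toEquiv.subtypeEquiv fun H ↦ by simp

theorem AddSubgroup.card_subgroups_index_eq_of_subsingleton (G : Type*) [AddGroup G]
    [Subsingleton G] (m : ℕ) :
    Nat.card {H : AddSubgroup G // H.index = m} = if m = 1 then 1 else 0 := by
  have hindex (H : AddSubgroup G) : H.index = 1 := by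
    rw [Subsingleton.elim H ⊤, AddSubgroup.index_top]
  split_ifs with hm
  · subst hm
    exact Nat.card_eq_one_iff_unique.2 ⟨inferInstance, ⟨⟨⊤, AddSubgroup.index_top⟩⟩⟩
  · have : IsEmpty {H : AddSubgroup G // H.index = m} := ⟨fun H ↦ hm (H.2 ▸ hindex H.1)⟩
    exact Nat.card_of_isEmpty

def intProdFinAddEquiv (n : ℕ) : ℤ × (Fin n → ℤ) ≃+ (Fin (n + 1) → ℤ) :=
  (Fin.consLinearEquiv ℤ fun _ ↦ ℤ).toAddEquiv

theorem finite_sublattices_index_eq (n : ℕ) {m : ℕ} (hm : m ≠ 0) :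
    Finite {H : AddSubgroup (Fin n → ℤ) // H.index = m} := by
  induction n generalizing m with
  | zero => infer_instance
  | succ n ih =>
    have := AddSubgroup.finite_subgroups_int_prod_index_eq hm fun e he ↦
      ih (Nat.pos_of_mem_divisors he).ne'
    exact Finite.of_equiv _ ((intProdFinAddEquiv n).subgroupsIndexEqCongr m)

open Polynomial in
-- This is the recursion of the Gaussian binomials `[n + k - 1, k]_X`.
noncomputable def sublatticePoly : ℕ → ℕ → ℕ[X]
  | 0, k => if k = 0 then 1 else 0
  | n + 1, k => ∑ j ∈ Finset.range (k + 1), X ^ j * sublatticePoly n j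

theorem sublatticeCount_prime_pow {p : ℕ} (hp : p.Prime) (n k : ℕ) :
    sublatticeCount n (p ^ k) = (sublatticePoly n k).eval p := by
  induction n generalizing k with
  | zero =>
    rw [sublatticeCount, AddSubgroup.card_subgroups_index_eq_of_subsingleton, sublatticePoly]
    simp [hp.ne_one, apply_ite]
  | succ n ih =>
    simp only [sublatticeCount] at ih ⊢
    rw [← Nat.card_congr ((intProdFinAddEquiv n).subgroupsIndexEqCongr _),
      AddSubgroup.card_subgroups_int_prod_index_eq (pow_ne_zero k hp.ne_zero)
        fun e he ↦ finite_sublattices_index_eq n (Nat.pos_of_mem_divisors he).ne',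
      Nat.sum_divisors_prime_pow hp, sublatticePoly, Polynomial.eval_finsetSum]
    simp [ih, mul_comm]

theorem sublattice_count_prime_pow_polynomial_general (n k : ℕ) :
    ∃ P : Polynomial ℕ, ∀ p : ℕ, p.Prime →
      sublatticeCount n (p ^ k) = P.eval p :=
  ⟨sublatticePoly n k, fun _ hp ↦ sublatticeCount_prime_pow hp n k⟩

/-- For fixed `n ≥ 1` and `k`, the number of subgroups of `ℤ^n` of index `p^k`, as a
function of the prime `p`, is a polynomial in `p` with nonnegative integer coefficients
(the Gaussian binomial polynomial `[n+k-1 choose k]_q` evaluated at `q = p`). -/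
theorem sublattice_count_prime_pow_polynomial (n k : ℕ) (hn : 1 ≤ n) :
    ∃ P : Polynomial ℕ, ∀ p : ℕ, p.Prime →
      sublatticeCount n (p ^ k) = P.eval p :=
  sublattice_count_prime_pow_polynomial_general n k
end
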